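/- Let N ≥ 1, 0 ≤ r ≤ N-1, and let e_j = (-1)^{j-1} [z^{N+1-j}]((y+z)(1+z x_1)···(1+z x_r)) for 0 ≤ j ≤ N+1 (so e_j = 0 unless N-r ≤ j ≤ N+1). For m ≥ 1, let T_m be the m×m determinant with (i,j)-entry e_{N - i + j} (a banded Toeplitz determinant with e_N on the diagonal and e_{N+1} on the superdiagonal), and set T_0 = 1. Then T_m = (-1)^{(N-1)m} [t^m] (1/((1-t)(1-x_1 y t)···(1-x_r y t))). -/

import Mathlib

open Polynomial

noncomputable abbrev KF (r : ℕ) : Type := FractionRing (MvPolynomial (Fin (r + 1)) ℚ)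

noncomputable def yv (r : ℕ) : KF r :=
  algebraMap (MvPolynomial (Fin (r + 1)) ℚ) (KF r) (MvPolynomial.X 0)

noncomputable def xv (r : ℕ) (p : Fin r) : KF r :=
  algebraMap (MvPolynomial (Fin (r + 1)) ℚ) (KF r) (MvPolynomial.X p.succ)

/-- The polynomial `(y+z)(1+z x_1)⋯(1+z x_r)` in the variable `z`. -/
noncomputable def Pz (r : ℕ) : Polynomial (KF r) :=
  (Polynomial.C (yv r) + Polynomial.X) *
    ∏ p : Fin r, (1 + Polynomial.C (xv r p) * Polynomial.X)

/-- `e_j = (-1)^(j-1) [z^(N+1-j)]((y+z)∏(1+z x_p))` for `0 ≤ j ≤ N+1`, else `0`. -/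
noncomputable def elemE (N r : ℕ) (j : ℤ) : KF r :=
  if 0 ≤ j ∧ j ≤ (N : ℤ) + 1 then
    (-1 : KF r) ^ (j + 1).toNat * (Pz r).coeff (N + 1 - j.toNat)
  else 0

/-!
Put `G(t) = (1 - t) ∏ (1 - x_p y t)`. Substituting `z = -y t` gives
`(y + z) ∏ (1 + x_p z) = y G(t)`, so `e_{N-i+j} = (-1)^N y^{j-i} g_{i+1-j}` where `g_k = [t^k] G`
(both sides vanish off the band, as `deg G = r + 1 ≤ N`). Hence, up to the sign `(-1)^{Nm}` and a
diagonal conjugation, `T_m` is the Hessenberg determinant `det (g_{i+1-j})`. That determinant is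
the bottom-left cofactor of the unitriangular Toeplitz matrix `(g_{i-j})_{0 ≤ i, j ≤ m}`, whose
inverse is the Toeplitz matrix of `G⁻¹`; so it equals `(-1)^m [t^m] G⁻¹` (Wronski's formula).
-/

open scoped PowerSeries

namespace PowerSeries

section Semiring

variable {R : Type*} [Semiring R]

noncomputable def lowerToeplitz (f : R⟦X⟧) (n : ℕ) : Matrix (Fin n) (Fin n) R :=
  Matrix.of fun i j => if j ≤ i then coeff ((i : ℕ) - j) f else 0

noncomputable def hessenberg (f : R⟦X⟧) (m : ℕ) : Matrix (Fin m) (Fin m) R :=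
  Matrix.of fun i j => if (j : ℕ) ≤ i + 1 then coeff ((i : ℕ) + 1 - j) f else 0

theorem lowerToeplitz_mul (f g : R⟦X⟧) (n : ℕ) :
    lowerToeplitz f n * lowerToeplitz g n = lowerToeplitz (f * g) n := by
  ext i j
  simp only [lowerToeplitz, Matrix.mul_apply, Matrix.of_apply, ite_mul, zero_mul, mul_ite,
    mul_zero]
  split_ifs with hji
  · rw [coeff_mul]
    simp only [← ite_and, ← Finset.sum_filter]
    refine Finset.sum_bij' (fun k _ => ((i : ℕ) - k, (k : ℕ) - j))
      (fun p hp => ⟨j + p.2, by have := Finset.HasAntidiagonal.mem_antidiagonal.mp hp; omega⟩)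
      ?_ ?_ ?_ ?_ fun _ _ => rfl
    · intro k hk
      simp only [Finset.mem_filter] at hk
      rw [Finset.HasAntidiagonal.mem_antidiagonal]
      omega
    · intro p hp
      have := Finset.HasAntidiagonal.mem_antidiagonal.mp hp
      simp only [Finset.mem_filter, Finset.mem_univ, true_and, Fin.le_def]
      omega
    · intro k hk
      simp only [Finset.mem_filter] at hk
      ext
      simp only
      omega
    · intro p hp
      have := Finset.HasAntidiagonal.mem_antidiagonal.mp hp
      ext <;> simp only <;> omega
  · refine Finset.sum_eq_zero fun k _ => ?_
    split_ifs <;> first | rfl | exact absurd (le_trans ‹_› ‹_›) hji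

theorem lowerToeplitz_one (n : ℕ) : lowerToeplitz (1 : R⟦X⟧) n = 1 := by
  ext i j
  simp only [lowerToeplitz, Matrix.of_apply, coeff_one, Matrix.one_apply]
  split_ifs <;> first | rfl | omega

theorem lowerToeplitz_submatrix_succ_castSucc (f : R⟦X⟧) (m : ℕ) :
    (lowerToeplitz f (m + 1)).submatrix Fin.succ Fin.castSucc = hessenberg f m :=
  Matrix.ext fun i j => by
    simp only [Matrix.submatrix_apply, lowerToeplitz, hessenberg, Matrix.of_apply, Fin.le_def,
      Fin.val_succ, Fin.val_castSucc]

end Semiring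

theorem rescale_C {R : Type*} [CommSemiring R] (a c : R) : rescale a (C c) = C c := by
  ext n
  simp only [coeff_rescale, coeff_C]
  split_ifs with h <;> simp [h]

section CommRing

variable {R : Type*} [CommRing R]

theorem det_lowerToeplitz (f : R⟦X⟧) (n : ℕ) :
    (lowerToeplitz f n).det = constantCoeff f ^ n := by
  rw [Matrix.det_of_isLowerTriangular]
  · simp [lowerToeplitz]
  · intro i j hij
    simp [lowerToeplitz, not_le.mpr (OrderDual.toDual_lt_toDual.mp hij)]

theorem det_hessenberg {g h : R⟦X⟧} (hg : constantCoeff g = 1) (hgh : g * h = 1) (m : ℕ) :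
    (hessenberg g m).det = (-1) ^ m * coeff m h := by
  set L := lowerToeplitz g (m + 1)
  have hL : L.det = 1 := by rw [det_lowerToeplitz, hg, one_pow]
  have hadj : L.adjugate = lowerToeplitz h (m + 1) :=
    calc L.adjugate = L.adjugate * (L * lowerToeplitz h (m + 1)) := by
          rw [lowerToeplitz_mul, hgh, lowerToeplitz_one, mul_one]
      _ = lowerToeplitz h (m + 1) := by
          rw [← mul_assoc, Matrix.adjugate_mul, hL, one_smul, one_mul]
  have hcorner := congr_fun₂ hadj (Fin.last m) 0
  rw [Matrix.adjugate_fin_succ_eq_det_submatrix, Fin.succAbove_zero, Fin.succAbove_last,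
    lowerToeplitz_submatrix_succ_castSucc] at hcorner
  simp only [lowerToeplitz, Matrix.of_apply, Fin.val_last, Fin.val_zero, Fin.zero_le, if_true,
    Nat.sub_zero, zero_add] at hcorner
  rw [← hcorner, ← mul_assoc, ← mul_pow, neg_one_mul, neg_neg, one_pow, one_mul]

end CommRing

end PowerSeries

noncomputable def denomSeries (r : ℕ) : (KF r)⟦X⟧ :=
  (1 - PowerSeries.X) * ∏ p : Fin r, (1 - PowerSeries.C (xv r p * yv r) * PowerSeries.X)

theorem constantCoeff_denomSeries (r : ℕ) : PowerSeries.constantCoeff (denomSeries r) = 1 := by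
  simp [denomSeries]

theorem yv_ne_zero (r : ℕ) : yv r ≠ 0 :=
  (map_ne_zero_iff _ (IsFractionRing.injective _ (KF r))).mpr (MvPolynomial.X_ne_zero 0)

theorem rescale_Pz (r : ℕ) :
    PowerSeries.rescale (-yv r) (Pz r : (KF r)⟦X⟧) = PowerSeries.C (yv r) * denomSeries r := by
  have hcoe : (Pz r : (KF r)⟦X⟧) = (PowerSeries.C (yv r) + PowerSeries.X) *
      ∏ p : Fin r, (1 + PowerSeries.C (xv r p) * PowerSeries.X) := by
    simp only [Pz, ← Polynomial.coeToPowerSeries.ringHom_apply, map_mul, map_add, map_prod,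
      map_one]
    simp only [Polynomial.coeToPowerSeries.ringHom_apply, Polynomial.coe_C, Polynomial.coe_X]
  simp only [hcoe, denomSeries, map_mul, map_prod, map_add, map_one, PowerSeries.rescale_C,
    PowerSeries.rescale_X, map_neg, ← mul_assoc]
  congr 1
  · ring
  · exact Finset.prod_congr rfl fun p _ => by ring

theorem neg_yv_pow_mul_coeff_Pz (r k : ℕ) :
    (-yv r) ^ k * (Pz r).coeff k = yv r * PowerSeries.coeff k (denomSeries r) := by
  simpa [PowerSeries.coeff_rescale, PowerSeries.coeff_C_mul] using
    congrArg (PowerSeries.coeff k) (rescale_Pz r)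

theorem natDegree_Pz_le (r : ℕ) : (Pz r).natDegree ≤ r + 1 := by
  have hprod : (∏ p : Fin r, (1 + C (xv r p) * X)).natDegree ≤ r :=
    (natDegree_prod_le _ _).trans <|
      (Finset.sum_le_card_nsmul _ _ 1 fun p _ => by compute_degree!).trans (by simp)
  unfold Pz
  compute_degree
  omega

theorem yv_pow_mul_elemE {N r : ℕ} (hr : r ≤ N) {m : ℕ} (i j : Fin m) :
    yv r ^ ((i : ℕ) + 1) * elemE N r ((N : ℤ) - (i : ℕ) + (j : ℕ)) =
      (-1) ^ N * yv r ^ ((j : ℕ) + 1) * PowerSeries.hessenberg (denomSeries r) m i j := by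
  have hcoeff := neg_yv_pow_mul_coeff_Pz r ((i : ℕ) + 1 - j)
  simp only [PowerSeries.hessenberg, Matrix.of_apply, elemE]
  by_cases hband : (j : ℕ) ≤ i + 1
  swap
  · rw [if_neg hband, if_neg (by omega), mul_zero, mul_zero]
  rw [if_pos hband]
  by_cases hlow : (i : ℕ) ≤ N + j
  swap
  · have hP : (Pz r).coeff ((i : ℕ) + 1 - j) = 0 :=
      coeff_eq_zero_of_natDegree_lt ((natDegree_Pz_le r).trans_lt (by omega))
    rw [hP, mul_zero] at hcoeff
    rw [if_neg (by omega), mul_zero]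
    linear_combination ((-1) ^ N * yv r ^ (j : ℕ)) * hcoeff
  rw [if_pos (by omega), show ((N : ℤ) - i + j + 1).toNat = N + 1 + j - i by omega,
    show N + 1 - ((N : ℤ) - i + j).toNat = (i : ℕ) + 1 - j by omega]
  set k := (i : ℕ) + 1 - j
  set s := N + 1 + j - i
  have hsign : (-1 : KF r) ^ N = (-1) ^ s * (-1) ^ k := by
    rw [← pow_add, show s + k = N + 2 by omega, pow_add]
    norm_num
  have hk : (-1 : KF r) ^ k * (-1) ^ k = 1 := by rw [← mul_pow]; norm_num
  rw [neg_pow] at hcoeff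
  rw [hsign, show (i : ℕ) + 1 = j + k by omega, pow_add]
  linear_combination ((-1) ^ s * (-1) ^ k * yv r ^ (j : ℕ)) * hcoeff -
    ((-1) ^ s * yv r ^ (j : ℕ) * yv r ^ k * (Pz r).coeff k) * hk

theorem toeplitz_det_eq (N r m : ℕ) (hN : 1 ≤ N) (hr : r ≤ N - 1) :
    Matrix.det (Matrix.of fun i j : Fin m => elemE N r ((N : ℤ) - (i : ℕ) + (j : ℕ)))
      = (-1) ^ ((N - 1) * m) *
        PowerSeries.coeff (R := KF r) m
          (((1 - PowerSeries.X) *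
            ∏ p : Fin r, (1 - PowerSeries.C (R := KF r) (xv r p * yv r) * PowerSeries.X))⁻¹) := by
  change _ = _ * PowerSeries.coeff m (denomSeries r)⁻¹
  have hscaled : (∏ i : Fin m, yv r ^ ((i : ℕ) + 1)) *
      (Matrix.of fun i j : Fin m => elemE N r ((N : ℤ) - (i : ℕ) + (j : ℕ))).det =
      (∏ i : Fin m, (-1) ^ N * yv r ^ ((i : ℕ) + 1)) *
        (PowerSeries.hessenberg (denomSeries r) m).det := by
    rw [← Matrix.det_mul_column, ← Matrix.det_mul_row]
    congr 1
    ext i j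
    exact yv_pow_mul_elemE (by omega) i j
  have hinv : denomSeries r * (denomSeries r)⁻¹ = 1 :=
    PowerSeries.mul_inv_cancel _ (by simp [constantCoeff_denomSeries])
  rw [Finset.prod_mul_distrib, Finset.prod_const, Finset.card_univ, Fintype.card_fin,
    PowerSeries.det_hessenberg (constantCoeff_denomSeries r) hinv] at hscaled
  have hsign : ((-1 : KF r) ^ N) ^ m * (-1) ^ m = (-1) ^ ((N - 1) * m) := by
    obtain ⟨n, rfl⟩ : ∃ n, N = n + 1 := ⟨N - 1, by omega⟩
    rw [Nat.add_sub_cancel, pow_mul, pow_succ, mul_pow, mul_assoc, ← mul_pow, neg_one_mul,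
      neg_neg, one_pow, mul_one]
  refine mul_left_cancel₀ (Finset.prod_ne_zero_iff.mpr fun i _ => pow_ne_zero _ (yv_ne_zero r))
    (hscaled.trans ?_)
  rw [← hsign]
  ring
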